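/- arXiv:1011.5384 — 9 statements merged into one kernel-verified Lean document; each statement's English description precedes it below -/
import Mathlib

section
/- In a classical congestion game, if a single player i unilaterally changes its strategy from σ_i to σ_i', then the change in Rosenthal's potential function φ(σ) = Σ_{r∈R} Σ_{k=1}^{n_r(σ)} g_r(k) equals the change in player i's payoff: φ(σ_i', σ_{-i}) − φ(σ_i, σ_{-i}) = q^i(σ_i', σ_{-i}) − q^i(σ_i, σ_{-i}). -/
open scoped Classical

/-- Number of users of resource `r` under strategy profile `σ` in a classical congestion game. -/
noncomputable def nUsers {N : ℕ} {R : Type*} [Fintype R]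
    (σ : Fin N → Finset R) (r : R) : ℕ :=
  (Finset.univ.filter (fun i => r ∈ σ i)).card

/-- Player `i`'s total payoff: the sum of `g r (n_r σ)` over the resources in its strategy. -/
noncomputable def cgPayoff {N : ℕ} {R : Type*} [Fintype R]
    (g : R → ℕ → ℤ) (σ : Fin N → Finset R) (i : Fin N) : ℤ :=
  ∑ r ∈ σ i, g r (nUsers σ r)

/-- Rosenthal's potential function `φ(σ) = Σ_r Σ_{k=1}^{n_r(σ)} g_r(k)`. -/
noncomputable def rosenthal {N : ℕ} {R : Type*} [Fintype R]
    (g : R → ℕ → ℤ) (σ : Fin N → Finset R) : ℤ :=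
  ∑ r : R, ∑ k ∈ Finset.Icc 1 (nUsers σ r), g r k

private lemma nUsers_split {N : ℕ} {R : Type*} [Fintype R]
    (σ : Fin N → Finset R) (i : Fin N) (r : R) :
    nUsers σ r = ((Finset.univ.erase i).filter (fun j => r ∈ σ j)).card
      + (if r ∈ σ i then 1 else 0) := by
  have huniv : (Finset.univ : Finset (Fin N)) = insert i (Finset.univ.erase i) :=
    (Finset.insert_erase (Finset.mem_univ i)).symm
  rw [nUsers, huniv, Finset.filter_insert]
  have hi : i ∉ (Finset.univ.erase i).filter (fun j => r ∈ σ j) := by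
    simp
  split <;> simp [Finset.card_insert_of_notMem hi]

/-- If player `i` unilaterally changes its strategy, the change in Rosenthal's potential
function equals the change in player `i`'s payoff. -/
theorem rosenthal_potential_change {N : ℕ} {R : Type*} [Fintype R]
    (g : R → ℕ → ℤ) (i : Fin N) (σ σ' : Fin N → Finset R)
    (h : ∀ j, j ≠ i → σ' j = σ j) :
    rosenthal g σ' - rosenthal g σ = cgPayoff g σ' i - cgPayoff g σ i := by
  classical
  set m : R → ℕ := fun r => ((Finset.univ.erase i).filter (fun j => r ∈ σ j)).card with hm
  have hm' : ∀ r, nUsers σ' r = m r + (if r ∈ σ' i then 1 else 0) := by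
    intro r
    rw [nUsers_split σ' i r]
    congr 1
    apply Finset.card_bij (fun j _ => j)
    · intro j hj; simp only [Finset.mem_filter, Finset.mem_erase] at *
      exact ⟨hj.1, (h j hj.1.1) ▸ hj.2⟩
    · intro a b _ _ hab; exact hab
    · intro j hj; refine ⟨j, ?_, rfl⟩
      simp only [Finset.mem_filter, Finset.mem_erase] at *
      exact ⟨hj.1, (h j hj.1.1).symm ▸ hj.2⟩
  have hmσ : ∀ r, nUsers σ r = m r + (if r ∈ σ i then 1 else 0) := fun r => nUsers_split σ i r
  have payoff_eq : ∀ (τ : Fin N → Finset R),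
      cgPayoff g τ i = ∑ r : R, (if r ∈ τ i then g r (nUsers τ r) else 0) := by
    intro τ
    rw [cgPayoff, Finset.sum_ite_mem, Finset.univ_inter]
  rw [rosenthal, rosenthal, payoff_eq, payoff_eq, ← Finset.sum_sub_distrib, ← Finset.sum_sub_distrib]
  apply Finset.sum_congr rfl
  intro r _
  rw [hm' r, hmσ r]
  have hst : ∀ n : ℕ, ∑ k ∈ Finset.Icc 1 (n + 1), g r k
      = (∑ k ∈ Finset.Icc 1 n, g r k) + g r (n + 1) := by
    intro n
    exact Finset.sum_Icc_succ_top (Nat.succ_le_succ (Nat.zero_le n)) _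
  by_cases h1 : r ∈ σ' i <;> by_cases h2 : r ∈ σ i <;> simp [h1, h2, hst]
end

section
/- Reverse-change inequality: In a two-resource spatial congestion game with non-increasing user-specific payoff functions, suppose player i changes from resource s to the other resource s̄ at time t and later changes back from s̄ to s at time t', both changes being strict improvements. Then |SS| > |OO|, where SS is the set of i's neighbors having the same resource as i at both change times, and OO the set of i's neighbors having the opposite resource at both change times. -/
open scoped Classical

/-- Number of neighbors of `i` in `G` choosing resource `r` under profile `σ`. -/
noncomputable def nbrCount {ι : Type*} [Fintype ι]
    (G : SimpleGraph ι) (σ : ι → Bool) (i : ι) (r : Bool) : ℕ :=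
  (Finset.univ.filter (fun j => G.Adj i j ∧ σ j = r)).card

/-- Reverse-change inequality (Lemma 1): in a two-resource spatial congestion game with
non-increasing payoff functions, if player `i` strictly improves by switching from `s` to `!s`
(at the profile `σ`, the state at the first change time) and later strictly improves by
switching back from `!s` to `s` (at the profile `τ`, the state at the second change time),
then the set of `i`'s neighbors sharing `i`'s resource at both times is strictly larger than
the set of neighbors with the opposite resource at both times. -/
theorem reverse_change_inequality {ι : Type*} [Fintype ι] (G : SimpleGraph ι)
    (g : Bool → ℕ → ℤ) (hg : ∀ r, Antitone (g r))
    (i : ι) (s : Bool) (σ τ : ι → Bool)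
    (hσi : σ i = s) (hτi : τ i = !s)
    (h1 : g s (nbrCount G σ i s + 1) < g (!s) (nbrCount G σ i (!s) + 1))
    (h2 : g (!s) (nbrCount G τ i (!s) + 1) < g s (nbrCount G τ i s + 1)) :
    (Finset.univ.filter (fun j => G.Adj i j ∧ σ j = σ i ∧ τ j = τ i)).card >
    (Finset.univ.filter (fun j => G.Adj i j ∧ σ j ≠ σ i ∧ τ j ≠ τ i)).card := by
  set a := (Finset.univ.filter (fun j => G.Adj i j ∧ σ j = s ∧ τ j = !s)).card with ha
  set b := (Finset.univ.filter (fun j => G.Adj i j ∧ σ j = !s ∧ τ j = s)).card with hb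
  set c := (Finset.univ.filter (fun j => G.Adj i j ∧ σ j = s ∧ τ j = s)).card with hc
  set d := (Finset.univ.filter (fun j => G.Adj i j ∧ σ j = !s ∧ τ j = !s)).card with hd
  have hsplit : ∀ (f h : ι → Bool) (r u : Bool),
      nbrCount G f i r =
        (Finset.univ.filter (fun j => G.Adj i j ∧ f j = r ∧ h j = u)).card +
        (Finset.univ.filter (fun j => G.Adj i j ∧ f j = r ∧ h j = !u)).card := by
    intro f h r u
    rw [nbrCount, ← Finset.card_filter_add_card_filter_not (p := fun j => h j = u)]
    congr 1
    · apply Finset.card_bij (fun j _ => j) <;> intro j hj <;>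
        simp_all [Finset.mem_filter] <;> tauto
    · apply Finset.card_bij (fun j _ => j) <;> intro j hj <;>
        simp_all [Finset.mem_filter, Bool.eq_not_iff] <;> tauto
  have e1 : nbrCount G σ i s = c + a := by
    have := hsplit σ τ s s; rw [this]
  have e2 : nbrCount G σ i (!s) = b + d := by
    have := hsplit σ τ (!s) s; rw [this]
  have e3 : nbrCount G τ i s = b + c := by
    have := hsplit τ σ s (!s); rw [this]
    simp only [Bool.not_not]
    have h1' : (Finset.univ.filter (fun j => G.Adj i j ∧ τ j = s ∧ σ j = !s)).card = b := by
      rw [hb]; congr 1; ext j; simp; tauto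
    have h2' : (Finset.univ.filter (fun j => G.Adj i j ∧ τ j = s ∧ σ j = s)).card = c := by
      rw [hc]; congr 1; ext j; simp; tauto
    omega
  have e4 : nbrCount G τ i (!s) = a + d := by
    have := hsplit τ σ (!s) s; rw [this]
    have h1' : (Finset.univ.filter (fun j => G.Adj i j ∧ τ j = !s ∧ σ j = s)).card = a := by
      rw [ha]; congr 1; ext j; simp; tauto
    have h2' : (Finset.univ.filter (fun j => G.Adj i j ∧ τ j = !s ∧ σ j = !s)).card = d := by
      rw [hd]; congr 1; ext j; simp; tauto
    omega
  rw [e1, e2] at h1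
  rw [e3, e4] at h2
  have key : b < a := by
    by_contra hab
    push_neg at hab
    have k1 : g s (b + c + 1) ≤ g s (c + a + 1) := hg s (by omega)
    have k2 : g (!s) (b + d + 1) ≤ g (!s) (a + d + 1) := hg (!s) (by omega)
    omega
  have egoal1 : (Finset.univ.filter (fun j => G.Adj i j ∧ σ j = σ i ∧ τ j = τ i)).card = a := by
    rw [ha]; congr 1; ext j; simp [hσi, hτi]
  have egoal2 : (Finset.univ.filter (fun j => G.Adj i j ∧ σ j ≠ σ i ∧ τ j ≠ τ i)).card = b := by
    rw [hb]; congr 1; ext j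
    cases hjs : σ j <;> cases hjt : τ j <;> cases s <;> simp_all
  rw [egoal1, egoal2]
  exact key
end

section
/- Single-link extension lemma: Suppose every N-player spatial congestion game (with single-resource strategies, undirected graph, non-increasing user-specific payoffs) has a pure strategy Nash equilibrium. Then every (N+1)-player spatial congestion game whose graph is formed by attaching a new player via a single edge to one existing player of an N-player graph also has a pure strategy Nash equilibrium. -/
/-!
Split on the new leaf's payoffs. If some resource `r₀` is worth more to the leaf even when
shared with its neighbour than any other resource alone, park the leaf on `r₀`; its neighbour
then sees `r₀` as one player more congested, which is again an `N`-player game, so an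
equilibrium of that game extends. Otherwise take an equilibrium of the old game and let the
leaf pick the best resource its neighbour is not using: this only makes that resource worse
for the neighbour, who therefore has no reason to deviate, and the leaf prefers it to sharing.
-/

open scoped Classical

/-- Number of neighbors of `i` in `G` choosing resource `r` under profile `σ`. -/
noncomputable def cnt {ι R : Type*} [Fintype ι]
    (G : SimpleGraph ι) (σ : ι → R) (i : ι) (r : R) : ℕ :=
  (Finset.univ.filter (fun j => G.Adj i j ∧ σ j = r)).card

/-- Pure strategy Nash equilibrium of a spatial congestion game with user-specific payoffs. -/
def IsNE {ι R : Type*} [Fintype ι]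
    (G : SimpleGraph ι) (g : ι → R → ℕ → ℤ) (σ : ι → R) : Prop :=
  ∀ (i : ι) (r : R), g i r (cnt G σ i r + 1) ≤ g i (σ i) (cnt G σ i (σ i) + 1)

/-- The graph obtained from `G` by attaching one new player (`none`) via a single edge to
the existing player `j0`. -/
def extGraph {ι : Type*} (G : SimpleGraph ι) (j0 : ι) : SimpleGraph (Option ι) where
  Adj x y := (∃ a b, x = some a ∧ y = some b ∧ G.Adj a b) ∨
    (x = none ∧ y = some j0) ∨ (x = some j0 ∧ y = none)
  symm := ⟨by
    rintro x y (⟨a, b, rfl, rfl, h⟩ | ⟨rfl, rfl⟩ | ⟨rfl, rfl⟩)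
    · exact Or.inl ⟨b, a, rfl, rfl, h.symm⟩
    · exact Or.inr (Or.inr ⟨rfl, rfl⟩)
    · exact Or.inr (Or.inl ⟨rfl, rfl⟩)⟩
  loopless := ⟨by
    rintro x h
    rcases h with ⟨a, b, h1, h2, hab⟩ | ⟨h1, h2⟩ | ⟨h1, h2⟩
    · rw [h1] at h2; rw [Option.some_inj] at h2; subst h2; exact G.irrefl hab
    · rw [h1] at h2; simp at h2
    · rw [h2] at h1; simp at h1⟩

section ExtGraph

variable {ι R : Type*} (G : SimpleGraph ι) (j0 : ι)

@[simp]
lemma extGraph_adj_some_some (a b : ι) : (extGraph G j0).Adj (some a) (some b) ↔ G.Adj a b := by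
  simp [extGraph]

@[simp]
lemma extGraph_adj_some_none (a : ι) : (extGraph G j0).Adj (some a) none ↔ a = j0 := by
  simp [extGraph]

@[simp]
lemma extGraph_adj_none_some (a : ι) : (extGraph G j0).Adj none (some a) ↔ a = j0 := by
  simp [extGraph, eq_comm]

variable [Fintype ι]

lemma cnt_extGraph_some (σ : ι → R) (t : R) (i : ι) (r : R) :
    cnt (extGraph G j0) (Option.elim' t σ) (some i) r =
      cnt G σ i r + if i = j0 ∧ t = r then 1 else 0 := by
  simp only [cnt, Finset.card_filter, Fintype.sum_option, extGraph_adj_some_some,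
    extGraph_adj_some_none, Option.elim'_none, Option.elim'_some, add_comm]

lemma cnt_extGraph_none (σ : ι → R) (t : R) (r : R) :
    cnt (extGraph G j0) (Option.elim' t σ) none r = if σ j0 = r then 1 else 0 := by
  simp only [cnt, Finset.card_filter, Fintype.sum_option, extGraph_adj_none_some,
    Option.elim'_some, SimpleGraph.irrefl, if_false, zero_add, ite_and,
    Finset.sum_ite_eq', Finset.mem_univ, if_true]
  congr

end ExtGraph

/-- The payoffs of the old players once the leaf attached to `j0` sits on `t`. -/
noncomputable def shiftPayoff {ι R : Type*} (g : ι → R → ℕ → ℤ) (j0 : ι) (t : R) :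
    ι → R → ℕ → ℤ :=
  fun i r n => g i r (n + if i = j0 ∧ t = r then 1 else 0)

lemma antitone_shiftPayoff {ι R : Type*} {g : ι → R → ℕ → ℤ} (hg : ∀ i r, Antitone (g i r))
    (j0 : ι) (t : R) (i : ι) (r : R) : Antitone (shiftPayoff g j0 t i r) :=
  fun _ _ hmn => hg i r (by omega)

/-- `s` is the resource chosen by the leaf's only neighbour. -/
def IsLeafBestResponse {R : Type*} (h : R → ℕ → ℤ) (s t : R) : Prop :=
  ∀ r, h r ((if s = r then 1 else 0) + 1) ≤ h t ((if s = t then 1 else 0) + 1)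

lemma isNE_extGraph_iff {ι R : Type*} [Fintype ι] {G : SimpleGraph ι} {j0 : ι}
    {g : Option ι → R → ℕ → ℤ} {σ : ι → R} {t : R} :
    IsNE (extGraph G j0) g (Option.elim' t σ) ↔
      IsNE G (shiftPayoff (fun i => g (some i)) j0 t) σ ∧
        IsLeafBestResponse (g none) (σ j0) t := by
  simp only [IsNE, IsLeafBestResponse, Option.forall, cnt_extGraph_none, cnt_extGraph_some,
    Option.elim'_none, Option.elim'_some, shiftPayoff, add_right_comm _ 1, and_comm]

lemma IsNE.shiftPayoff_of_ne {ι R : Type*} [Fintype ι] {G : SimpleGraph ι}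
    {g : ι → R → ℕ → ℤ} (hg : ∀ i r, Antitone (g i r)) {σ : ι → R} (hσ : IsNE G g σ)
    {j0 : ι} {t : R} (ht : t ≠ σ j0) : IsNE G (shiftPayoff g j0 t) σ := by
  intro i r
  have hunshifted : shiftPayoff g j0 t i (σ i) = g i (σ i) := by
    ext n
    simp only [shiftPayoff]
    rw [if_neg (by rintro ⟨rfl, h⟩; exact ht h), add_zero]
  rw [hunshifted]
  exact (hg i r (by simp)).trans (hσ i r)

lemma isLeafBestResponse_of_dominant {R : Type*} {h : R → ℕ → ℤ} (hh : ∀ r, Antitone (h r))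
    {r₀ : R} (hr₀ : ∀ r, r ≠ r₀ → h r 1 ≤ h r₀ 2) (s : R) : IsLeafBestResponse h s r₀ := by
  intro r
  rcases eq_or_ne r r₀ with rfl | hr
  · rfl
  calc h r ((if s = r then 1 else 0) + 1) ≤ h r 1 := hh r (by simp)
    _ ≤ h r₀ 2 := hr₀ r hr
    _ ≤ h r₀ ((if s = r₀ then 1 else 0) + 1) := hh r₀ (by split_ifs <;> simp)

lemma exists_isLeafBestResponse_ne {R : Type*} [Fintype R] {h : R → ℕ → ℤ} {s : R}
    (hs : ∃ w, w ≠ s ∧ h s 2 < h w 1) : ∃ t, t ≠ s ∧ IsLeafBestResponse h s t := by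
  obtain ⟨w, hws, hw⟩ := hs
  obtain ⟨t, hts, htmax⟩ := Finset.exists_max_image {r | r ≠ s} (h · 1) ⟨w, by simpa using hws⟩
  simp only [Finset.mem_filter, Finset.mem_univ, true_and] at hts htmax
  refine ⟨t, hts, fun r => ?_⟩
  rw [if_neg hts.symm, zero_add]
  rcases eq_or_ne r s with rfl | hrs
  · simpa using hw.le.trans (htmax w hws)
  · simpa [hrs.symm] using htmax r hrs

theorem single_link_extension_general {ι R : Type*} [Fintype ι] [Fintype R]
    (hNE : ∀ (G : SimpleGraph ι) (g : ι → R → ℕ → ℤ),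
      (∀ i r, Antitone (g i r)) → ∃ σ : ι → R, IsNE G g σ)
    (G : SimpleGraph ι) (j0 : ι)
    (g : Option ι → R → ℕ → ℤ) (hg : ∀ i r, Antitone (g i r)) :
    ∃ σ : Option ι → R, IsNE (extGraph G j0) g σ := by
  have hold : ∀ i r, Antitone (g (some i) r) := fun i => hg (some i)
  by_cases hdom : ∃ r₀, ∀ r, r ≠ r₀ → g none r 1 ≤ g none r₀ 2
  · obtain ⟨r₀, hr₀⟩ := hdom
    obtain ⟨σ, hσ⟩ := hNE G _ (antitone_shiftPayoff hold j0 r₀)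
    exact ⟨Option.elim' r₀ σ,
      isNE_extGraph_iff.2 ⟨hσ, isLeafBestResponse_of_dominant (hg none) hr₀ _⟩⟩
  · push Not at hdom
    obtain ⟨σ, hσ⟩ := hNE G _ hold
    obtain ⟨t, hts, ht⟩ := exists_isLeafBestResponse_ne (hdom (σ j0))
    exact ⟨Option.elim' t σ, isNE_extGraph_iff.2 ⟨hσ.shiftPayoff_of_ne hold hts, ht⟩⟩

/-- Single-link extension lemma: if every spatial congestion game on the player set `ι`
(with non-increasing user-specific payoffs) has a pure strategy Nash equilibrium, then every
game obtained by attaching one new player via a single edge to an existing player also has a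
pure strategy Nash equilibrium. -/
theorem single_link_extension {ι R : Type*} [Fintype ι] [Fintype R] [Nonempty R]
    (hNE : ∀ (G : SimpleGraph ι) (g : ι → R → ℕ → ℤ),
      (∀ i r, Antitone (g i r)) → ∃ σ : ι → R, IsNE G g σ)
    (G : SimpleGraph ι) (j0 : ι)
    (g : Option ι → R → ℕ → ℤ) (hg : ∀ i r, Antitone (g i r)) :
    ∃ σ : Option ι → R, IsNE (extGraph G j0) g σ :=
  single_link_extension_general hNE G j0 g hg
end

section
/- Every spatial congestion game whose undirected interference graph is a tree (with any number of resources and arbitrary non-increasing user-specific payoff functions) has at least one pure strategy Nash equilibrium. -/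
open scoped Classical

section Helpers

variable {ι : Type*}

private lemma exists_leaf_aux [Fintype ι] (G : SimpleGraph ι) (hT : G.IsTree)
    (h2 : 2 ≤ Fintype.card ι) : ∃ ℓ, G.degree ℓ = 1 := by
  by_contra h
  push_neg at h
  have hdeg : ∀ v, 2 ≤ G.degree v := by
    intro v
    have h1 : 1 ≤ G.degree v := by
      rw [Nat.one_le_iff_ne_zero, ← Nat.pos_iff_ne_zero, G.degree_pos_iff_exists_adj]
      obtain ⟨w, hw⟩ := Fintype.exists_ne_of_one_lt_card h2 v
      obtain ⟨q⟩ := hT.isConnected.preconnected v w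
      cases q with
      | nil => exact absurd rfl hw.symm
      | cons ha _ => exact ⟨_, ha⟩
    have := h v
    omega
  have hsum : 2 * Fintype.card ι ≤ ∑ v, G.degree v := by
    calc 2 * Fintype.card ι = ∑ _v : ι, 2 := by simp [mul_comm]
    _ ≤ ∑ v, G.degree v := Finset.sum_le_sum (fun v _ => hdeg v)
  rw [G.sum_degrees_eq_twice_card_edges] at hsum
  have := hT.card_edgeFinset
  omega

private lemma path_avoid_aux (G : SimpleGraph ι) {ℓ p0 : ι} (hnb : ∀ x, G.Adj ℓ x ↔ x = p0) :
    ∀ {u v : ι} (w : G.Walk u v), w.IsPath → ℓ ≠ u → ℓ ≠ v → ℓ ∉ w.support := by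
  intro u v w
  induction w with
  | nil => intro _ hu _; simpa using hu
  | @cons a b c hab q ih =>
    intro hp hu hv
    rw [SimpleGraph.Walk.support_cons, List.mem_cons]
    rintro (h1 | h2)
    · exact hu h1
    · rw [SimpleGraph.Walk.cons_isPath_iff] at hp
      by_cases hb : ℓ = b
      · subst hb
        cases q with
        | nil => exact hv rfl
        | @cons _ d _ hld q2 =>
          have hd : d = p0 := (hnb d).mp hld
          have ha : a = p0 := (hnb a).mp hab.symm
          apply hp.2
          rw [SimpleGraph.Walk.support_cons]
          right
          exact ha ▸ hd ▸ q2.start_mem_support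
      · exact ih hp.1 hb hv h2

private lemma walk_induce_aux (G : SimpleGraph ι) (s : Set ι) :
    ∀ {a b : ι} (p : G.Walk a b), (∀ x ∈ p.support, x ∈ s) →
      ∀ (ha : a ∈ s) (hb : b ∈ s), (G.induce s).Reachable ⟨a, ha⟩ ⟨b, hb⟩ := by
  intro a b p
  induction p with
  | nil => intro _ ha hb; rfl
  | @cons a c b hac q ih =>
    intro hs ha hb
    have hc : c ∈ s := hs c (by simp)
    have h1 : (G.induce s).Adj ⟨a, ha⟩ ⟨c, hc⟩ := hac
    exact h1.reachable.trans (ih (fun x hx => hs x (by simp [hx])) hc hb)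

private lemma induce_acyclic_aux (G : SimpleGraph ι) (s : Set ι) (hA : G.IsAcyclic) :
    (G.induce s).IsAcyclic := by
  intro v c hc
  exact hA _ ((SimpleGraph.Walk.map_isCycle_iff_of_injective
    (f := (SimpleGraph.Embedding.induce (G := G) s).toHom)
    (SimpleGraph.Embedding.induce (G := G) s).injective).mpr hc)

end Helpers

private lemma tree_NE_aux {R : Type*} [Fintype R] [Nonempty R] :
    ∀ (n : ℕ) {ι : Type*} [Fintype ι] (G : SimpleGraph ι), Fintype.card ι = n →
      G.IsTree → ∀ (g : ι → R → ℕ → ℤ), (∀ i r, Antitone (g i r)) →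
      ∃ σ : ι → R, ∀ (i : ι) (r : R),
        g i r (cnt G σ i r + 1) ≤ g i (σ i) (cnt G σ i (σ i) + 1) := by
  intro n
  induction n using Nat.strong_induction_on with
  | _ n ih =>
  intro ι _ G hcard hT g hg
  by_cases hsmall : Fintype.card ι ≤ 1
  · -- Base case: at most one vertex, no neighbors at all.
    have hcnt : ∀ (σ : ι → R) i r, cnt G σ i r = 0 := by
      intro σ i r
      rw [cnt, Finset.card_eq_zero, Finset.filter_eq_empty_iff]
      intro j _
      rintro ⟨hadj, -⟩
      have : i = j := Fintype.card_le_one_iff.mp hsmall i j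
      exact G.irrefl (this ▸ hadj)
    have hex : ∀ i : ι, ∃ b, ∀ r, g i r 1 ≤ g i b 1 := by
      intro i
      obtain ⟨b, -, hb⟩ := Finset.exists_max_image Finset.univ (fun r => g i r 1)
        ⟨Classical.arbitrary R, Finset.mem_univ _⟩
      exact ⟨b, fun r => hb r (Finset.mem_univ r)⟩
    choose σ hσ using hex
    exact ⟨σ, fun i r => by rw [hcnt, hcnt]; exact hσ i r⟩
  push_neg at hsmall
  -- Find a leaf ℓ with unique neighbor p.
  obtain ⟨ℓ, hℓ⟩ := exists_leaf_aux G hT (by omega)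
  obtain ⟨p, hp⟩ := Finset.card_eq_one.mp hℓ
  have hnb : ∀ x, G.Adj ℓ x ↔ x = p := by
    intro x
    rw [← SimpleGraph.mem_neighborFinset, hp, Finset.mem_singleton]
  have hpℓ : p ≠ ℓ := by
    intro h
    exact G.irrefl (h ▸ (hnb p).mpr rfl)
  set s : Set ι := {j | j ≠ ℓ} with hs
  have hmem : ∀ j : ι, j ∈ s ↔ j ≠ ℓ := fun j => Iff.rfl
  have hps : p ∈ s := hpℓ
  -- The induced graph is a tree.
  have hT' : (G.induce s).IsTree := by
    constructor
    · rw [SimpleGraph.connected_iff]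
      refine ⟨?_, ⟨⟨p, hps⟩⟩⟩
      rintro ⟨a, ha⟩ ⟨b, hb⟩
      obtain ⟨w, hw, -⟩ := hT.existsUnique_path a b
      have havoid : ℓ ∉ w.support :=
        path_avoid_aux G hnb w hw (Ne.symm ha) (Ne.symm hb)
      exact walk_induce_aux G s w (fun x hx hxe => havoid (hxe ▸ hx)) ha hb
    · exact induce_acyclic_aux G s hT.IsAcyclic
  have hcards : Fintype.card ↥s = n - 1 := by
    have h1 : Fintype.card ↥s = Fintype.card {j : ι // ¬ (j = ℓ)} :=
      Fintype.card_congr (Equiv.subtypeEquivRight (fun _ => Iff.rfl))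
    rw [h1, Fintype.card_subtype_compl, Fintype.card_subtype_eq, hcard]
  -- Best-response of the leaf, with its key properties.
  have hmax : ∀ rp : R, ∃ b : R,
      (∀ r, g ℓ r ((if rp = r then 1 else 0) + 1) ≤ g ℓ b ((if rp = b then 1 else 0) + 1)) ∧
      ((b = rp) ↔ (∀ r' ≠ rp, g ℓ r' 1 < g ℓ rp 2)) ∧
      (∀ r ≠ rp, (∀ r' ≠ r, g ℓ r' 1 < g ℓ r 2) → b = r) := by
    intro rp
    by_cases hc : ∀ r' ≠ rp, g ℓ r' 1 < g ℓ rp 2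
    · refine ⟨rp, ?_, iff_of_true rfl hc, ?_⟩
      · intro r
        by_cases hr : rp = r
        · subst hr; exact le_refl _
        · simp only [if_neg hr, if_pos rfl]
          exact (hc r (fun h => hr h.symm)).le
      · intro r hr hcr
        exfalso
        have h1 := hc r hr
        have h2 := hcr rp (Ne.symm hr)
        have h3 : g ℓ r 2 ≤ g ℓ r 1 := hg ℓ r (by omega)
        have h4 : g ℓ rp 2 ≤ g ℓ rp 1 := hg ℓ rp (by omega)
        omega
    · have hc2 := hc
      push_neg at hc2
      obtain ⟨r0, hr0, hge⟩ := hc2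
      obtain ⟨b, hbmem, hbmax⟩ := Finset.exists_max_image
        (Finset.univ.filter (· ≠ rp)) (fun r => g ℓ r 1) ⟨r0, by simp [hr0]⟩
      have hbne : b ≠ rp := by simpa using (Finset.mem_filter.mp hbmem).2
      refine ⟨b, ?_, ⟨fun h => absurd h hbne, fun h => absurd h hc⟩, ?_⟩
      · intro r
        have hifb : (if rp = b then 1 else 0) = 0 := if_neg (Ne.symm hbne)
        rw [hifb]
        by_cases hr : rp = r
        · subst hr
          rw [if_pos rfl]
          calc g ℓ rp 2 ≤ g ℓ r0 1 := hge
          _ ≤ g ℓ b 1 := hbmax r0 (by simp [hr0])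
        · rw [if_neg hr]
          exact hbmax r (Finset.mem_filter.mpr ⟨Finset.mem_univ r, fun hh => hr hh.symm⟩)
      · intro r hr hcr
        by_contra hbr
        have h5 : g ℓ b 1 < g ℓ r 2 := hcr b hbr
        have h6 : g ℓ r 2 ≤ g ℓ r 1 := hg ℓ r (by omega)
        have h7 : g ℓ r 1 ≤ g ℓ b 1 := hbmax r (by simp [hr])
        omega
  choose BR hBR using hmax
  -- Modified game on the subtree.
  set g' : ↥s → R → ℕ → ℤ :=
    fun j r m => if (j : ι) = p then g p r (m + (if BR r = r then 1 else 0))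
      else g (j : ι) r m with hg'def
  have hg' : ∀ (j : ↥s) r, Antitone (g' j r) := by
    intro j r m m' hmm
    by_cases hj : (j : ι) = p
    · simp only [hg'def, if_pos hj]
      exact hg p r (by omega)
    · simp only [hg'def, if_neg hj]
      exact hg _ r hmm
  obtain ⟨σ', hσ'⟩ := ih (n - 1) (by omega) (G.induce s) hcards hT' g' hg'
  set rp : R := σ' ⟨p, hps⟩ with hrp
  set σ : ι → R := fun j => if h : j ≠ ℓ then σ' ⟨j, h⟩ else BR rp with hσdef
  have hσℓ : σ ℓ = BR rp := by simp [hσdef]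
  have hσcoe : ∀ a : ↥s, σ ↑a = σ' a := by
    rintro ⟨a, ha⟩
    exact dif_pos ha
  have hσp : σ p = rp := by rw [hσcoe ⟨p, hps⟩]
  -- Counting lemmas.
  have hcntℓ : ∀ r, cnt G σ ℓ r = (if rp = r then 1 else 0) := by
    intro r
    rw [cnt]
    split_ifs with h
    · rw [Finset.card_eq_one]
      refine ⟨p, ?_⟩
      ext x
      simp only [Finset.mem_filter, Finset.mem_univ, true_and, Finset.mem_singleton]
      constructor
      · rintro ⟨hadj, -⟩
        exact (hnb x).mp hadj
      · intro hx
        rw [hx]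
        exact ⟨(hnb p).mpr rfl, by rw [hσp, ← h]⟩
    · rw [Finset.card_eq_zero, Finset.filter_eq_empty_iff]
      intro x _
      rintro ⟨hadj, hval⟩
      have hxp := (hnb x).mp hadj
      subst hxp
      rw [hσp] at hval
      exact h hval
  have hsub : ∀ (i : ↥s) r, cnt (G.induce s) σ' i r =
      (Finset.univ.filter (fun j : ι => (G.Adj ↑i j ∧ σ j = r) ∧ j ≠ ℓ)).card := by
    intro i r
    rw [cnt]
    apply Finset.card_bij (fun (a : ↥s) _ => (a : ι))
    · intro a ha
      simp only [Finset.mem_filter, Finset.mem_univ, true_and] at ha ⊢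
      obtain ⟨hadj, hval⟩ := ha
      exact ⟨⟨hadj, by rw [hσcoe a, hval]⟩, a.2⟩
    · intro a _ b _ hab
      exact Subtype.ext hab
    · intro j hj
      simp only [Finset.mem_filter, Finset.mem_univ, true_and] at hj
      obtain ⟨⟨hadj, hval⟩, hjℓ⟩ := hj
      refine ⟨⟨j, hjℓ⟩, ?_, rfl⟩
      simp only [Finset.mem_filter, Finset.mem_univ, true_and]
      exact ⟨hadj, by rw [← hval, hσcoe ⟨j, hjℓ⟩]⟩
  have hsplit : ∀ (i : ↥s) r, cnt G σ ↑i r =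
      cnt (G.induce s) σ' i r + (if G.Adj ↑i ℓ ∧ σ ℓ = r then 1 else 0) := by
    intro i r
    rw [hsub, cnt]
    have hkey := Finset.card_filter_add_card_filter_not
      (s := Finset.univ.filter (fun j : ι => G.Adj ↑i j ∧ σ j = r)) (p := fun j => j ≠ ℓ)
    rw [Finset.filter_filter, Finset.filter_filter] at hkey
    have h2 : (Finset.univ.filter (fun j : ι => (G.Adj ↑i j ∧ σ j = r) ∧ ¬ j ≠ ℓ)).card =
        (if G.Adj ↑i ℓ ∧ σ ℓ = r then 1 else 0) := by
      split_ifs with h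
      · rw [Finset.card_eq_one]
        refine ⟨ℓ, ?_⟩
        ext x
        simp only [Finset.mem_filter, Finset.mem_univ, true_and, Finset.mem_singleton, not_not]
        constructor
        · rintro ⟨-, hx⟩; exact hx
        · rintro rfl; exact ⟨h, rfl⟩
      · rw [Finset.card_eq_zero, Finset.filter_eq_empty_iff]
        intro x _
        rintro ⟨hP, hx⟩
        rw [not_not] at hx
        subst hx
        exact h hP
    omega
  have heBR : ∀ r, (if BR r = r then 1 else 0) ≤ (if BR rp = r then 1 else 0) := by
    intro r
    by_cases hBRr : BR r = r
    · rw [if_pos hBRr]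
      by_cases hr : r = rp
      · subst hr
        rw [if_pos hBRr]
      · have : BR rp = r := (hBR rp).2.2 r hr ((hBR r).2.1.mp hBRr)
        rw [if_pos this]
    · rw [if_neg hBRr]
      split_ifs <;> omega
  -- Construct the equilibrium.
  refine ⟨σ, ?_⟩
  intro i r
  by_cases hiℓ : i = ℓ
  · subst hiℓ
    rw [hcntℓ r, hcntℓ (σ i)]
    rw [hσℓ]
    exact (hBR rp).1 r
  · by_cases hip : i = p
    · -- the neighbor of the leaf
      subst hip
      have hadjpℓ : G.Adj i ℓ := ((hnb i).mpr rfl).symm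
      have hgp : ∀ r' m, g' ⟨i, hps⟩ r' m = g i r' (m + (if BR r' = r' then 1 else 0)) := by
        intro r' m
        simp only [hg'def, if_true]
      have hσirp : σ' ⟨i, hps⟩ = rp := rfl
      have hσi : σ i = rp := hσp
      have hcnti : ∀ r', cnt G σ i r' =
          cnt (G.induce s) σ' ⟨i, hps⟩ r' + (if BR rp = r' then 1 else 0) := by
        intro r'
        rw [hsplit ⟨i, hps⟩ r', hσℓ]
        congr 1
        simp [hadjpℓ]
      have hstep := hσ' ⟨i, hps⟩ r
      rw [hgp, hgp, hσirp] at hstep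
      rw [hσi, hcnti r, hcnti rp]
      have harith1 : cnt (G.induce s) σ' ⟨i, hps⟩ rp + (if BR rp = rp then 1 else 0) + 1 =
          cnt (G.induce s) σ' ⟨i, hps⟩ rp + 1 + (if BR rp = rp then 1 else 0) := by omega
      rw [harith1]
      calc g i r (cnt (G.induce s) σ' ⟨i, hps⟩ r + (if BR rp = r then 1 else 0) + 1)
          ≤ g i r (cnt (G.induce s) σ' ⟨i, hps⟩ r + 1 + (if BR r = r then 1 else 0)) := by
            apply hg i r
            have := heBR r
            omega
        _ ≤ g i rp (cnt (G.induce s) σ' ⟨i, hps⟩ rp + 1 + (if BR rp = rp then 1 else 0)) := hstep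
    · -- an ordinary vertex, not adjacent to the leaf
      have hnadj : ¬ G.Adj i ℓ := by
        intro h
        exact hip ((hnb i).mp h.symm)
      have hgi : ∀ r' m, g' ⟨i, hiℓ⟩ r' m = g i r' m := by
        intro r' m
        simp only [hg'def]
        rw [if_neg (show ¬ ((⟨i, hiℓ⟩ : ↥s) : ι) = p from hip)]
      have hcnti : ∀ r', cnt G σ i r' = cnt (G.induce s) σ' ⟨i, hiℓ⟩ r' := by
        intro r'
        rw [hsplit ⟨i, hiℓ⟩ r']
        simp [hnadj]
      have hstep := hσ' ⟨i, hiℓ⟩ r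
      rw [hgi, hgi] at hstep
      rw [hσcoe ⟨i, hiℓ⟩, hcnti r, hcnti (σ' ⟨i, hiℓ⟩)]
      exact hstep

/-- Every spatial congestion game whose undirected interference graph is a tree, with any
finite resource set and arbitrary non-increasing user-specific payoff functions, has at
least one pure strategy Nash equilibrium. -/
theorem tree_has_NE {ι R : Type*} [Fintype ι] [Fintype R] [Nonempty R]
    (G : SimpleGraph ι) (hT : G.IsTree)
    (g : ι → R → ℕ → ℤ) (hg : ∀ i r, Antitone (g i r)) :
    ∃ σ : ι → R, ∀ (i : ι) (r : R),
      g i r (cnt G σ i r + 1) ≤ g i (σ i) (cnt G σ i (σ i) + 1) := by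
  exact tree_NE_aux (Fintype.card ι) G rfl hT g hg
end

section
/- If a spatial congestion game has a dominant resource r, i.e., g_r^i(K_d + 1) ≥ g_{r'}^i(1) for all players i and all resources r', where K_d is the maximum degree of the interference graph, then the profile in which every player chooses r is a pure strategy Nash equilibrium. -/
open scoped Classical

/-- If a spatial congestion game has a dominant resource `r`, i.e.
`g_r^i(K_d + 1) ≥ g_{r'}^i(1)` for every player `i` and every resource `r'`, where `K_d`
bounds the degrees of the interference graph, then the profile where every player chooses
`r` is a pure strategy Nash equilibrium. -/
theorem dominant_resource_NE {ι R : Type*} [Fintype ι]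
    (G : SimpleGraph ι) [DecidableRel G.Adj]
    (g : ι → R → ℕ → ℤ) (hg : ∀ i r, Antitone (g i r))
    (Kd : ℕ) (hK : ∀ i, G.degree i ≤ Kd)
    (r : R) (hdom : ∀ (i : ι) (r' : R), g i r' 1 ≤ g i r (Kd + 1)) :
    ∀ (i : ι) (r' : R),
      g i r' (cnt G (fun _ => r) i r' + 1) ≤
        g i r (cnt G (fun _ => r) i r + 1) := by
  intro i r'
  have hcr : cnt G (fun _ => r) i r = G.degree i := by
    simp [cnt, SimpleGraph.degree, SimpleGraph.neighborFinset_eq_filter]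
  calc g i r' (cnt G (fun _ => r) i r' + 1)
      ≤ g i r' 1 := hg i r' (Nat.le_add_left 1 _)
    _ ≤ g i r (Kd + 1) := hdom i r'
    _ ≤ g i r (cnt G (fun _ => r) i r + 1) := by
        apply hg i r
        rw [hcr]
        exact Nat.add_le_add_right (hK i) 1
end

section
/- There exists a spatial congestion game with two resources, three players on an undirected path graph, and non-monotonic (not non-increasing) payoff functions g_1, g_2 satisfying g_2(2) > g_1(2) > g_2(1) > g_1(3) > g_1(1) > g_2(3) (e.g., g_1(1)=2, g_1(2)=5, g_1(3)=3, g_2(1)=4, g_2(2)=6, g_2(3)=1) that has no pure strategy Nash equilibrium. -/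
open scoped Classical

/-- The path graph on 3 players: player `2` is adjacent to players `0` and `1`
(players `0` and `1` are not adjacent). -/
def adj3 (i j : Fin 3) : Prop := (i = 2 ∧ j ≠ 2) ∨ (j = 2 ∧ i ≠ 2)

/-- Number of neighbors of `i` choosing resource `r` under profile `σ`. -/
noncomputable def cnt3 (σ : Fin 3 → Fin 2) (i : Fin 3) (r : Fin 2) : ℕ :=
  (Finset.univ.filter (fun j => adj3 i j ∧ σ j = r)).card

lemma cnt3_zero (σ : Fin 3 → Fin 2) (r : Fin 2) :
    cnt3 σ 0 r = if σ 2 = r then 1 else 0 := by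
  rw [cnt3, show (Finset.univ : Finset (Fin 3)) = {0,1,2} by decide]
  simp [Finset.filter_insert, adj3, Finset.filter_singleton]
  split <;> simp

lemma cnt3_one (σ : Fin 3 → Fin 2) (r : Fin 2) :
    cnt3 σ 1 r = if σ 2 = r then 1 else 0 := by
  rw [cnt3, show (Finset.univ : Finset (Fin 3)) = {0,1,2} by decide]
  simp [Finset.filter_insert, adj3, Finset.filter_singleton]
  split <;> simp

lemma cnt3_two (σ : Fin 3 → Fin 2) (r : Fin 2) :
    cnt3 σ 2 r = (if σ 0 = r then 1 else 0) + (if σ 1 = r then 1 else 0) := by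
  rw [cnt3, show (Finset.univ : Finset (Fin 3)) = {0,1,2} by decide]
  simp [Finset.filter_insert, adj3, Finset.filter_singleton]
  split <;> split <;> simp

/-- There exists a 3-player, 2-resource spatial congestion game on a path with
non-monotonic non-user-specific payoff functions satisfying
`g_2(2) > g_1(2) > g_2(1) > g_1(3) > g_1(1) > g_2(3)`
(resources `1, 2` encoded as `0, 1`) that has no pure strategy Nash equilibrium. -/
theorem no_NE_nonmonotonic :
    ∃ g : Fin 2 → ℕ → ℤ,
      g 1 2 > g 0 2 ∧ g 0 2 > g 1 1 ∧ g 1 1 > g 0 3 ∧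
      g 0 3 > g 0 1 ∧ g 0 1 > g 1 3 ∧
      ¬ ∃ σ : Fin 3 → Fin 2, ∀ (i : Fin 3) (r : Fin 2),
        g r (cnt3 σ i r + 1) ≤ g (σ i) (cnt3 σ i (σ i) + 1) := by
  refine ⟨fun r n => if r = 0 then (if n = 1 then 2 else if n = 2 then 5 else 3)
      else (if n = 1 then 4 else if n = 2 then 6 else 1), by norm_num, by norm_num,
      by norm_num, by norm_num, by norm_num, ?_⟩
  rintro ⟨σ, h⟩
  have A := h 0 0; have A' := h 0 1
  have B := h 1 0; have B' := h 1 1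
  have C := h 2 0; have C' := h 2 1
  rw [cnt3_zero, cnt3_zero] at A A'
  rw [cnt3_one, cnt3_one] at B B'
  rw [cnt3_two, cnt3_two] at C C'
  have e : ∀ x : Fin 2, x = 0 ∨ x = 1 := by decide
  rcases e (σ 0) with h0 | h0 <;> rcases e (σ 1) with h1 | h1 <;>
    rcases e (σ 2) with h2 | h2 <;>
    simp [h0, h1, h2] at A A' B B' C C' <;> omega
end

section
/- There exists a spatial congestion game on a directed interference graph with 4 players and 3 resources and non-increasing payoff functions satisfying g_3(1) > g_2(1) > g_2(2) > g_3(2) > g_1(1) > g_1(2) > g_2(3) > g_1(3) > g_2(4) > g_1(4) > g_3(3) > g_3(4) that has no pure strategy Nash equilibrium. -/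
open scoped Classical

def gv : Fin 3 → ℕ → ℤ
  | 0, 0 => 9 | 0, 1 => 8 | 0, 2 => 7 | 0, 3 => 5 | 0, _+4 => 3
  | 1, 0 => 12 | 1, 1 => 11 | 1, 2 => 10 | 1, 3 => 6 | 1, _+4 => 4
  | 2, 0 => 13 | 2, 1 => 12 | 2, 2 => 9 | 2, 3 => 2 | 2, _+4 => 1

def Kv : Fin 4 → Finset (Fin 4)
  | 0 => ∅ | 1 => {2} | 2 => {3} | 3 => {1}

/-- There exists a directed spatial congestion game with 4 players and 3 resources
(interference sets `K i`, not necessarily symmetric, not containing `i` itself) and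
non-increasing non-user-specific payoff functions satisfying the chain
`g_3(1) > g_2(1) > g_2(2) > g_3(2) > g_1(1) > g_1(2) > g_2(3) > g_1(3) > g_2(4) > g_1(4) >
g_3(3) > g_3(4)` (resources `1, 2, 3` encoded as `0, 1, 2`) that has no pure strategy
Nash equilibrium. -/
theorem no_NE_directed :
    ∃ (K : Fin 4 → Finset (Fin 4)) (g : Fin 3 → ℕ → ℤ),
      (∀ i, i ∉ K i) ∧ (∀ r, Antitone (g r)) ∧
      g 2 1 > g 1 1 ∧ g 1 1 > g 1 2 ∧ g 1 2 > g 2 2 ∧ g 2 2 > g 0 1 ∧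
      g 0 1 > g 0 2 ∧ g 0 2 > g 1 3 ∧ g 1 3 > g 0 3 ∧ g 0 3 > g 1 4 ∧
      g 1 4 > g 0 4 ∧ g 0 4 > g 2 3 ∧ g 2 3 > g 2 4 ∧
      ¬ ∃ σ : Fin 4 → Fin 3, ∀ (i : Fin 4) (r : Fin 3),
        g r (((K i).filter (fun j => σ j = r)).card + 1) ≤
          g (σ i) (((K i).filter (fun j => σ j = σ i)).card + 1) := by
  refine ⟨Kv, gv, ?_, ?_, ?_, ?_, ?_, ?_, ?_, ?_, ?_, ?_, ?_, ?_, ?_, ?_⟩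
  · decide
  · intro r
    apply antitone_nat_of_succ_le
    intro n
    fin_cases r <;> rcases n with _|_|_|_|n <;> simp [gv]
  all_goals first | decide
end

section
/- In the loop-game framework where each player i on a cycle has a unique best-response type (a(i), b(i), c(i)), if there exists a player i* with a(i*) = b(i*), and every spatial congestion game on a line (path) graph has a pure Nash equilibrium, then the game on the cycle has a pure strategy Nash equilibrium. -/
open scoped Classical

/-- Payoff of a player with payoff functions `g` choosing resource `r` when its two
neighbors choose `x` and `y`. -/
noncomputable def val {R : Type*} (g : R → ℕ → ℤ) (r x y : R) : ℤ :=
  g r (1 + (if x = r then 1 else 0) + (if y = r then 1 else 0))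

/-- On the path graph on `Fin M` (players `j` and `i` adjacent iff `|i - j| = 1`), the
number of neighbors of `i` choosing resource `r` under profile `σ`. -/
noncomputable def pathCnt {M : ℕ} {R : Type*} (σ : Fin M → R) (i : Fin M) (r : R) : ℕ :=
  (Finset.univ.filter
    (fun j : Fin M => (j.val + 1 = i.val ∨ i.val + 1 = j.val) ∧ σ j = r)).card

private lemma modfact (a n t : ℕ) (ha : a < 2 * n) (ht : a % n = t) :
    (a < n ∧ t = a) ∨ (n ≤ a ∧ t + n = a) := by
  rcases Nat.lt_or_ge a n with h1 | h1
  · exact Or.inl ⟨h1, by rw [← ht, Nat.mod_eq_of_lt h1]⟩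
  · refine Or.inr ⟨h1, ?_⟩
    rw [← ht, Nat.mod_eq_sub_mod h1, Nat.mod_eq_of_lt (by omega), Nat.sub_add_cancel h1]

private lemma pathCnt_eval {M : ℕ} {R : Type*} (σ : Fin M → R) (i : Fin M) (r : R) :
    pathCnt σ i r
      = (if h : i.val + 1 < M then (if σ ⟨i.val + 1, h⟩ = r then 1 else 0) else 0)
      + (if _ : 0 < i.val then
          (if σ ⟨i.val - 1, Nat.lt_of_le_of_lt (Nat.sub_le _ _) i.isLt⟩ = r then 1 else 0)
         else 0) := by
  classical
  rw [pathCnt]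
  have hsplit : (Finset.univ.filter
      (fun j : Fin M => (j.val + 1 = i.val ∨ i.val + 1 = j.val) ∧ σ j = r)) =
      (Finset.univ.filter (fun j : Fin M => i.val + 1 = j.val ∧ σ j = r)) ∪
      (Finset.univ.filter (fun j : Fin M => j.val + 1 = i.val ∧ σ j = r)) := by
    ext j
    simp only [Finset.mem_filter, Finset.mem_union, Finset.mem_univ, true_and]
    tauto
  rw [hsplit, Finset.card_union_of_disjoint (by
    rw [Finset.disjoint_left]
    intro j hj1 hj2
    simp only [Finset.mem_filter] at hj1 hj2
    omega)]
  congr 1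
  · by_cases h : i.val + 1 < M
    · rw [dif_pos h]
      by_cases hr : σ ⟨i.val + 1, h⟩ = r
      · rw [if_pos hr, Finset.card_eq_one]
        refine ⟨⟨i.val + 1, h⟩, ?_⟩
        ext j
        simp only [Finset.mem_filter, Finset.mem_univ, true_and, Finset.mem_singleton]
        constructor
        · rintro ⟨h1, -⟩; exact Fin.ext h1.symm
        · rintro rfl; exact ⟨rfl, hr⟩
      · rw [if_neg hr, Finset.card_eq_zero, Finset.filter_eq_empty_iff]
        rintro j - ⟨h1, h2⟩
        have hj : j = ⟨i.val + 1, h⟩ := Fin.ext h1.symm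
        subst hj
        exact hr h2
    · rw [dif_neg h, Finset.card_eq_zero, Finset.filter_eq_empty_iff]
      rintro j - ⟨h1, -⟩
      have := j.isLt
      omega
  · by_cases h : 0 < i.val
    · rw [dif_pos h]
      have hlt : i.val - 1 < M := Nat.lt_of_le_of_lt (Nat.sub_le _ _) i.isLt
      by_cases hr : σ ⟨i.val - 1, hlt⟩ = r
      · rw [if_pos hr, Finset.card_eq_one]
        refine ⟨⟨i.val - 1, hlt⟩, ?_⟩
        ext j
        simp only [Finset.mem_filter, Finset.mem_univ, true_and, Finset.mem_singleton]
        constructor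
        · rintro ⟨h1, -⟩; exact Fin.ext (show j.val = i.val - 1 by omega)
        · rintro rfl
          refine ⟨by simp; omega, hr⟩
      · rw [if_neg hr, Finset.card_eq_zero, Finset.filter_eq_empty_iff]
        rintro j - ⟨h1, h2⟩
        have hj : j = ⟨i.val - 1, hlt⟩ := Fin.ext (show j.val = i.val - 1 by omega)
        subst hj
        exact hr h2
    · rw [dif_neg h, Finset.card_eq_zero, Finset.filter_eq_empty_iff]
      rintro j - ⟨h1, -⟩
      omega

/-- Loop lemma (Lemma 4 / `a(i*) = b(i*)` case): players `0, ..., N+2` are arranged on a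
cycle; best responses are unique (no payoff ties).  If there is a player `i0` whose
resource `av` is its unique best response whenever at most one of its neighbors plays `av`
(i.e. `a(i0) = b(i0)`), and every spatial congestion game on a path graph has a pure Nash
equilibrium, then the game on the cycle has a pure strategy Nash equilibrium. -/
theorem loop_NE_of_a_eq_b {R : Type*} [Fintype R] [Nonempty R] (N : ℕ)
    (g : Fin (N + 3) → R → ℕ → ℤ) (hg : ∀ i r, Antitone (g i r))
    (hunique : ∀ (i : Fin (N + 3)) (x y : R),
      ∃! r : R, ∀ r' : R, val (g i) r' x y ≤ val (g i) r x y)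
    (hstar : ∃ (i0 : Fin (N + 3)) (av : R), ∀ x y : R, (x ≠ av ∨ y ≠ av) →
      ∀ r' : R, val (g i0) r' x y ≤ val (g i0) av x y)
    (hpath : ∀ (M : ℕ) (g' : Fin M → R → ℕ → ℤ), (∀ i r, Antitone (g' i r)) →
      ∃ σ : Fin M → R, ∀ (i : Fin M) (r : R),
        g' i r (pathCnt σ i r + 1) ≤ g' i (σ i) (pathCnt σ i (σ i) + 1)) :
    ∃ σ : Fin (N + 3) → R, ∀ (i : Fin (N + 3)) (r' : R),
      val (g i) r' (σ (i - 1)) (σ (i + 1)) ≤ val (g i) (σ i) (σ (i - 1)) (σ (i + 1)) := by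
  classical
  obtain ⟨i0, av, hav⟩ := hstar
  have hi0 : i0.val < N + 3 := i0.isLt
  obtain ⟨σ', hσ'⟩ := hpath (N + 2)
    (fun k r m => g ⟨(i0.val + 1 + k.val) % (N + 3), Nat.mod_lt _ (Nat.succ_pos _)⟩ r
      (m + if (k.val = 0 ∨ k.val = N + 1) ∧ r = av then 1 else 0))
    (fun k r m m' h => hg _ _ (Nat.add_le_add_right h _))
  obtain ⟨rs, hrs, hrsu⟩ := hunique i0 (σ' ⟨N + 1, Nat.lt_succ_self _⟩) (σ' ⟨0, Nat.succ_pos _⟩)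
  have hkey : rs ≠ av → σ' ⟨N + 1, Nat.lt_succ_self _⟩ = av ∧ σ' ⟨0, Nat.succ_pos _⟩ = av := by
    intro hne
    by_contra hc
    exact hne ((hrsu av (hav _ _ (not_and_or.mp hc))).symm)
  have hblt : ∀ i : Fin (N + 3), i ≠ i0 → (i.val + N + 2 - i0.val) % (N + 3) < N + 2 := by
    intro i h
    have h1 : i.val < N + 3 := i.isLt
    have h3 : i.val ≠ i0.val := fun hv => h (Fin.ext hv)
    obtain ⟨t, htd⟩ : ∃ t, (i.val + N + 2 - i0.val) % (N + 3) = t := ⟨_, rfl⟩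
    have := modfact _ _ t (by omega) htd
    omega
  refine ⟨fun i => if h : i = i0 then rs
    else σ' ⟨(i.val + N + 2 - i0.val) % (N + 3), hblt i h⟩, ?_⟩
  intro i r'
  beta_reduce
  have hiv : i.val < N + 3 := i.isLt
  have hm1 : (i - 1).val = (i.val + (N + 2)) % (N + 3) := by
    rw [Fin.sub_def]; simp [Fin.val_one, Nat.add_comm]
  have hp1 : (i + 1).val = (i.val + 1) % (N + 3) := by
    rw [Fin.add_def]; simp [Fin.val_one]
  obtain ⟨u, hu⟩ : ∃ u, (i.val + (N + 2)) % (N + 3) = u := ⟨_, rfl⟩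
  have Fu := modfact _ _ u (by omega) hu
  have hm1u : (i - 1).val = u := hm1.trans hu
  obtain ⟨v, hv⟩ : ∃ v, (i.val + 1) % (N + 3) = v := ⟨_, rfl⟩
  have Fv := modfact _ _ v (by omega) hv
  have hp1v : (i + 1).val = v := hp1.trans hv
  by_cases hii0 : i = i0
  · subst hii0
    rw [dif_pos rfl]
    have hm1ne : i - 1 ≠ i := fun h => by
      have h2 := congrArg Fin.val h; rw [hm1u] at h2; omega
    have hp1ne : i + 1 ≠ i := fun h => by
      have h2 := congrArg Fin.val h; rw [hp1v] at h2; omega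
    rw [dif_neg hm1ne, dif_neg hp1ne]
    have e1 : (⟨((i - 1).val + N + 2 - i.val) % (N + 3), hblt _ hm1ne⟩ : Fin (N + 2))
        = ⟨N + 1, Nat.lt_succ_self _⟩ := by
      apply Fin.ext
      show ((i - 1).val + N + 2 - i.val) % (N + 3) = N + 1
      rw [hm1u]
      obtain ⟨w, hw⟩ : ∃ w, (u + N + 2 - i.val) % (N + 3) = w := ⟨_, rfl⟩
      have Fw := modfact _ _ w (by omega) hw
      rw [hw]; omega
    have e2 : (⟨((i + 1).val + N + 2 - i.val) % (N + 3), hblt _ hp1ne⟩ : Fin (N + 2))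
        = ⟨0, Nat.succ_pos _⟩ := by
      apply Fin.ext
      show ((i + 1).val + N + 2 - i.val) % (N + 3) = 0
      rw [hp1v]
      obtain ⟨w, hw⟩ : ∃ w, (v + N + 2 - i.val) % (N + 3) = w := ⟨_, rfl⟩
      have Fw := modfact _ _ w (by omega) hw
      rw [hw]; omega
    rw [e1, e2]
    exact hrs r'
  · have h3 : i.val ≠ i0.val := fun hv => hii0 (Fin.ext hv)
    rw [dif_neg hii0]
    obtain ⟨t, htd⟩ : ∃ t, (i.val + N + 2 - i0.val) % (N + 3) = t := ⟨_, rfl⟩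
    have Ft := modfact _ _ t (by omega) htd
    have htlt : t < N + 2 := htd ▸ hblt i hii0
    have eσi : (⟨(i.val + N + 2 - i0.val) % (N + 3), hblt i hii0⟩ : Fin (N + 2))
        = ⟨t, htlt⟩ := Fin.ext htd
    rw [eσi]
    have hpl : (⟨(i0.val + 1 + t) % (N + 3), Nat.mod_lt _ (Nat.succ_pos _)⟩ : Fin (N + 3))
        = i := by
      apply Fin.ext
      show (i0.val + 1 + t) % (N + 3) = i.val
      obtain ⟨z, hz⟩ : ∃ z, (i0.val + 1 + t) % (N + 3) = z := ⟨_, rfl⟩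
      have Fz := modfact _ _ z (by omega) hz
      rw [hz]; omega
    have Hr : ∀ rr : R, g i rr (pathCnt σ' ⟨t, htlt⟩ rr + 1
          + (if (t = 0 ∨ t = N + 1) ∧ rr = av then 1 else 0))
        ≤ g i (σ' ⟨t, htlt⟩) (pathCnt σ' ⟨t, htlt⟩ (σ' ⟨t, htlt⟩) + 1
          + (if (t = 0 ∨ t = N + 1) ∧ σ' ⟨t, htlt⟩ = av then 1 else 0)) := by
      intro rr
      have H0 := hσ' ⟨t, htlt⟩ rr
      rw [hpl] at H0
      exact H0
    have hsw : ∀ z w : R, (if z = w then (1:ℕ) else 0) = (if w = z then 1 else 0) := by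
      intro z w; by_cases h : z = w
      · rw [if_pos h, if_pos h.symm]
      · rw [if_neg h, if_neg (fun hh => h hh.symm)]
    simp only [val]
    by_cases ht0 : t = 0
    · subst ht0
      have hm1i0 : i - 1 = i0 := Fin.ext (by rw [hm1u]; omega)
      rw [hm1i0, dif_pos rfl]
      have hp1ne : i + 1 ≠ i0 := fun h => by
        have h2 := congrArg Fin.val h; rw [hp1v] at h2; omega
      rw [dif_neg hp1ne]
      have h1lt : (1:ℕ) < N + 2 := by omega
      have ep : (⟨((i + 1).val + N + 2 - i0.val) % (N + 3), hblt _ hp1ne⟩ : Fin (N + 2))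
          = ⟨1, h1lt⟩ := by
        apply Fin.ext
        show ((i + 1).val + N + 2 - i0.val) % (N + 3) = 1
        rw [hp1v]
        obtain ⟨w, hw⟩ : ∃ w, (v + N + 2 - i0.val) % (N + 3) = w := ⟨_, rfl⟩
        have Fw := modfact _ _ w (by omega) hw
        rw [hw]; omega
      rw [ep]
      have hpc : ∀ rr : R, pathCnt σ' ⟨0, htlt⟩ rr
          = (if σ' ⟨1, h1lt⟩ = rr then 1 else 0) := by
        intro rr
        rw [pathCnt_eval, dif_pos (show (0:ℕ) + 1 < N + 2 by omega),
          dif_neg (show ¬((0:ℕ) < 0) by omega), add_zero]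
      have he : ∀ rr : R, (if ((0:ℕ) = 0 ∨ (0:ℕ) = N + 1) ∧ rr = av then (1:ℕ) else 0)
          = (if rr = av then 1 else 0) := by
        intro rr; by_cases h : rr = av
        · rw [if_pos ⟨Or.inl rfl, h⟩, if_pos h]
        · rw [if_neg (fun hc => h hc.2), if_neg h]
      have H := Hr r'
      rw [hpc, hpc, he, he] at H
      by_cases hrsav : rs = av
      · rw [hrsav, hsw av r', hsw av (σ' ⟨0, htlt⟩)]
        convert H using 2 <;> ring
      · have hyav : σ' ⟨0, htlt⟩ = av := (hkey hrsav).2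
        by_cases hr'av : r' = av
        · rw [hr'av, hyav, if_neg (show ¬(rs = av) from hrsav)]
        · rw [hyav] at H ⊢
          rw [if_neg hr'av, add_zero] at H
          refine le_trans (le_trans (hg i r' ?_) H) (hg i av ?_)
          · split_ifs <;> omega
          · rw [if_neg (show ¬(rs = av) from hrsav)]
            split_ifs <;> omega
    · by_cases htN : t = N + 1
      · have hp1i0 : i + 1 = i0 := Fin.ext (by rw [hp1v]; omega)
        rw [hp1i0, dif_pos rfl]
        have hm1ne : i - 1 ≠ i0 := fun h => by
          have h2 := congrArg Fin.val h; rw [hm1u] at h2; omega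
        rw [dif_neg hm1ne]
        have pfd : t - 1 < N + 2 := by omega
        have em : (⟨((i - 1).val + N + 2 - i0.val) % (N + 3), hblt _ hm1ne⟩ : Fin (N + 2))
            = ⟨t - 1, pfd⟩ := by
          apply Fin.ext
          show ((i - 1).val + N + 2 - i0.val) % (N + 3) = t - 1
          rw [hm1u]
          obtain ⟨w, hw⟩ : ∃ w, (u + N + 2 - i0.val) % (N + 3) = w := ⟨_, rfl⟩
          have Fw := modfact _ _ w (by omega) hw
          rw [hw]; omega
        rw [em]
        have hpc : ∀ rr : R, pathCnt σ' ⟨t, htlt⟩ rr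
            = (if σ' ⟨t - 1, pfd⟩ = rr then 1 else 0) := by
          intro rr
          rw [pathCnt_eval, dif_neg (show ¬(t + 1 < N + 2) by omega),
            dif_pos (show 0 < t by omega), zero_add]
        have he : ∀ rr : R, (if (t = 0 ∨ t = N + 1) ∧ rr = av then (1:ℕ) else 0)
            = (if rr = av then 1 else 0) := by
          intro rr; by_cases h : rr = av
          · rw [if_pos ⟨Or.inr htN, h⟩, if_pos h]
          · rw [if_neg (fun hc => h hc.2), if_neg h]
        have H := Hr r'
        rw [hpc, hpc, he, he] at H
        have hxeq : (⟨t, htlt⟩ : Fin (N + 2)) = ⟨N + 1, Nat.lt_succ_self _⟩ := Fin.ext htN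
        by_cases hrsav : rs = av
        · rw [hrsav, hsw av r', hsw av (σ' ⟨t, htlt⟩)]
          convert H using 2 <;> ring
        · have hxav : σ' ⟨t, htlt⟩ = av := by rw [hxeq]; exact (hkey hrsav).1
          by_cases hr'av : r' = av
          · rw [hr'av, hxav, if_neg (show ¬(rs = av) from hrsav)]
          · rw [hxav] at H ⊢
            rw [if_neg hr'av, add_zero] at H
            refine le_trans (le_trans (hg i r' ?_) H) (hg i av ?_)
            · split_ifs <;> omega
            · rw [if_neg (show ¬(rs = av) from hrsav)]
              split_ifs <;> omega
      · have hm1ne : i - 1 ≠ i0 := fun h => by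
          have h2 := congrArg Fin.val h; rw [hm1u] at h2; omega
        have hp1ne : i + 1 ≠ i0 := fun h => by
          have h2 := congrArg Fin.val h; rw [hp1v] at h2; omega
        rw [dif_neg hm1ne, dif_neg hp1ne]
        have pfd : t - 1 < N + 2 := by omega
        have pfu : t + 1 < N + 2 := by omega
        have em : (⟨((i - 1).val + N + 2 - i0.val) % (N + 3), hblt _ hm1ne⟩ : Fin (N + 2))
            = ⟨t - 1, pfd⟩ := by
          apply Fin.ext
          show ((i - 1).val + N + 2 - i0.val) % (N + 3) = t - 1
          rw [hm1u]
          obtain ⟨w, hw⟩ : ∃ w, (u + N + 2 - i0.val) % (N + 3) = w := ⟨_, rfl⟩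
          have Fw := modfact _ _ w (by omega) hw
          rw [hw]; omega
        have ep : (⟨((i + 1).val + N + 2 - i0.val) % (N + 3), hblt _ hp1ne⟩ : Fin (N + 2))
            = ⟨t + 1, pfu⟩ := by
          apply Fin.ext
          show ((i + 1).val + N + 2 - i0.val) % (N + 3) = t + 1
          rw [hp1v]
          obtain ⟨w, hw⟩ : ∃ w, (v + N + 2 - i0.val) % (N + 3) = w := ⟨_, rfl⟩
          have Fw := modfact _ _ w (by omega) hw
          rw [hw]; omega
        rw [em, ep]
        have hpc : ∀ rr : R, pathCnt σ' ⟨t, htlt⟩ rr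
            = (if σ' ⟨t + 1, pfu⟩ = rr then 1 else 0)
              + (if σ' ⟨t - 1, pfd⟩ = rr then 1 else 0) := by
          intro rr
          rw [pathCnt_eval, dif_pos (show t + 1 < N + 2 from pfu),
            dif_pos (show 0 < t by omega)]
        have he : ∀ rr : R, (if (t = 0 ∨ t = N + 1) ∧ rr = av then (1:ℕ) else 0) = 0 := by
          intro rr
          exact if_neg (fun hc => by rcases hc.1 with h | h <;> omega)
        have H := Hr r'
        rw [hpc, hpc, he, he, add_zero, add_zero] at H
        convert H using 2 <;> ring
end

section
/- Algorithm allocation properties: On a cycle of N players with types (a(i),b(i),c(i)) where a(i) ≠ b(i) for all i, the greedy allocation σ defined by σ_0 = a(0) and, for i = 1,...,N−1, σ_i = b(i) if a(i) = σ_{i−1} and σ_i = a(i) otherwise, satisfies: (1) σ_i ≠ σ_{i+1} for all i in {0,...,N−2}; (2) every player i in {1,...,N−2} plays its best response; and (3) if additionally σ_{N−1} ≠ σ_0, then σ is a pure Nash equilibrium. -/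
open scoped Classical

/-- `r` is a best response for a player with payoffs `g` whose neighbors play `x` and `y`. -/
def BR {R : Type*} (g : R → ℕ → ℤ) (r x y : R) : Prop :=
  ∀ r' : R, val g r' x y ≤ val g r x y

/-- The greedy allocation: `σ 0 = a 0`, and `σ (i+1) = b (i+1)` if `a (i+1) = σ i`,
else `σ (i+1) = a (i+1)`. -/
noncomputable def greedy {R : Type*} (a b : ℕ → R) : ℕ → R
  | 0 => a 0
  | n + 1 => if a (n + 1) = greedy a b n then b (n + 1) else a (n + 1)

/-- Properties of the greedy allocation on a cycle of `N + 3` players with types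
`(a(i), b(i), c(i))` such that `a(i) ≠ b(i)` for all `i`: (1) consecutive players along the
algorithm get distinct resources; (2) every interior player `1, ..., N+1` plays a best
response; (3) if moreover `σ_{N+2} ≠ σ_0`, the allocation is a pure Nash equilibrium. -/
theorem greedy_allocation_properties {R : Type*} [Fintype R] (N : ℕ)
    (g : ℕ → R → ℕ → ℤ) (hg : ∀ i r, Antitone (g i r))
    (a b c : ℕ → R)
    (hab : ∀ i, a i ≠ b i)
    (ha : ∀ (i : ℕ) (x y : R), x ≠ a i → y ≠ a i → BR (g i) (a i) x y)
    (hb : ∀ (i : ℕ) (x y : R), x = a i → y ≠ b i → BR (g i) (b i) x y) :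
    (∀ i : ℕ, i < N + 2 → greedy a b i ≠ greedy a b (i + 1)) ∧
    (∀ i : Fin (N + 3), 1 ≤ i.val → i.val ≤ N + 1 →
      BR (g i.val) (greedy a b i.val)
        (greedy a b ((i - 1 : Fin (N + 3)).val)) (greedy a b ((i + 1 : Fin (N + 3)).val))) ∧
    (greedy a b (N + 2) ≠ greedy a b 0 →
      ∀ i : Fin (N + 3),
        BR (g i.val) (greedy a b i.val)
          (greedy a b ((i - 1 : Fin (N + 3)).val))
          (greedy a b ((i + 1 : Fin (N + 3)).val))) := by
  have hne : ∀ n : ℕ, greedy a b n ≠ greedy a b (n + 1) := by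
    intro n
    by_cases h : a (n + 1) = greedy a b n
    · simp only [greedy, h, if_true]
      exact fun he => hab (n + 1) (h.trans he)
    · simp only [greedy, h, if_false]
      exact fun he => h he.symm
  have key : ∀ (n : ℕ) (y : R), y ≠ greedy a b (n + 1) →
      BR (g (n + 1)) (greedy a b (n + 1)) (greedy a b n) y := by
    intro n y hy
    by_cases h : a (n + 1) = greedy a b n
    · have hσ : greedy a b (n + 1) = b (n + 1) := by simp [greedy, h]
      rw [hσ]
      exact hb (n + 1) _ _ h.symm (fun he => hy (he.trans hσ.symm))
    · have hσ : greedy a b (n + 1) = a (n + 1) := by simp [greedy, h]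
      rw [hσ]
      exact ha (n + 1) _ _ (fun he => h he.symm) (fun he => hy (he.trans hσ.symm))
  have hval1 : ((1 : Fin (N + 3)) : ℕ) = 1 := rfl
  have vsub : ∀ j : Fin (N + 3), 1 ≤ j.val → ((j - 1 : Fin (N + 3))).val = j.val - 1 := by
    intro j hj
    have hlt := j.isLt
    rw [Fin.sub_def]
    show (N + 3 - (1 : Fin (N + 3)).val + j.val) % (N + 3) = j.val - 1
    rw [hval1, show N + 3 - 1 + j.val = (j.val - 1) + (N + 3) by omega,
      Nat.add_mod_right, Nat.mod_eq_of_lt (by omega)]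
  have vadd : ∀ j : Fin (N + 3), j.val + 1 < N + 3 → ((j + 1 : Fin (N + 3))).val = j.val + 1 := by
    intro j hj
    rw [Fin.add_def]
    show (j.val + (1 : Fin (N + 3)).val) % (N + 3) = j.val + 1
    rw [hval1, Nat.mod_eq_of_lt hj]
  refine ⟨fun i _ => hne i, ?_, ?_⟩
  · intro i h1 h2
    rw [vsub i h1, vadd i (by omega)]
    obtain ⟨k, hk⟩ : ∃ k, i.val = k + 1 := ⟨i.val - 1, by omega⟩
    rw [hk]
    simp only [Nat.add_sub_cancel]
    exact key k _ (fun he => hne (k + 1) he.symm)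
  · intro hlast i
    by_cases h0 : i.val = 0
    · have hi0 : i = 0 := Fin.ext h0
      subst hi0
      have hsub : ((0 - 1 : Fin (N + 3))).val = N + 2 := by
        rw [Fin.sub_def]
        show (N + 3 - (1 : Fin (N + 3)).val + (0 : Fin (N + 3)).val) % (N + 3) = N + 2
        rw [hval1, Fin.val_zero, Nat.add_zero, Nat.mod_eq_of_lt (by omega)]
        omega
      have hadd : ((0 + 1 : Fin (N + 3))).val = 1 := by
        rw [vadd 0 (by simp), Fin.val_zero]
      rw [show ((0 : Fin (N + 3)).val) = 0 from rfl, hsub, hadd]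
      have hσ0 : greedy a b 0 = a 0 := rfl
      rw [hσ0]
      exact ha 0 _ _ (fun he => hlast (he.trans hσ0.symm))
        (fun he => hne 0 (hσ0.trans he.symm))
    · by_cases htop : i.val = N + 2
      · have hsub : ((i - 1 : Fin (N + 3))).val = N + 1 := by
          rw [vsub i (by omega), htop]
          omega
        have hadd : ((i + 1 : Fin (N + 3))).val = 0 := by
          rw [Fin.add_def]
          show (i.val + (1 : Fin (N + 3)).val) % (N + 3) = 0
          rw [hval1, htop, Nat.mod_self]
        rw [htop, hsub, hadd]
        exact key (N + 1) _ (fun he => hlast he.symm)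
      · have hlt := i.isLt
        have h1 : 1 ≤ i.val := by omega
        rw [vsub i h1, vadd i (by omega)]
        obtain ⟨k, hk⟩ : ∃ k, i.val = k + 1 := ⟨i.val - 1, by omega⟩
        rw [hk]
        simp only [Nat.add_sub_cancel]
        exact key k _ (fun he => hne (k + 1) he.symm)
end
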